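/- arXiv:2401.01771 — 7 statements merged into one kernel-verified Lean document; each statement's English description precedes it below -/
import Mathlib

section
/- Let X be a Hilbert space, E ∈ L(X) be self-adjoint and non-negative, and A: D(A) ⊆ X → X be dissipative. Then for every λ ∈ ℂ with Re λ > 0 such that λE − A is boundedly invertible, and for every x ∈ X, one has Re ⟨(λE−A)⁻¹x, x⟩ ≥ 0. -/
open scoped InnerProductSpace

/-- `R` is the bounded (two-sided) inverse of `λ E - A`. -/
def IsDAEResolvent {X : Type*} [NormedAddCommGroup X] [InnerProductSpace ℂ X]
    (E : X →L[ℂ] X) (A : X →ₗ.[ℂ] X) (lam : ℂ) (R : X →L[ℂ] X) : Prop :=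
  (∀ z : X, ∃ h : R z ∈ A.domain, lam • E (R z) - A ⟨R z, h⟩ = z) ∧
  (∀ x : A.domain, R (lam • E (x : X) - A x) = (x : X))

/-! Writing `y = (λE − A)⁻¹ x`, the claim is `Re ⟨y, (λE − A) y⟩ ≥ 0`. Since `E` is symmetric,
`⟨y, E y⟩` is a non-negative real number, so `Re ⟨y, λ E y⟩ = Re λ · ⟨y, E y⟩ ≥ 0`, while
`Re ⟨y, A y⟩ ≤ 0` by dissipativity. -/

theorem LinearPMap.re_inner_smul_sub_nonneg {X : Type*} [NormedAddCommGroup X]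
    [InnerProductSpace ℂ X] {E : X →L[ℂ] X} (hE : (E : X →ₗ[ℂ] X).IsSymmetric)
    (hEnn : ∀ x : X, 0 ≤ (⟪x, E x⟫_ℂ).re) {A : X →ₗ.[ℂ] X}
    (hA : ∀ x : A.domain, (⟪(x : X), A x⟫_ℂ).re ≤ 0) {lam : ℂ} (hlam : 0 ≤ lam.re)
    (y : A.domain) : 0 ≤ (⟪(y : X), lam • E y - A y⟫_ℂ).re := by
  have hEreal : ((⟪(y : X), E y⟫_ℂ).re : ℂ) = ⟪(y : X), E y⟫_ℂ :=
    hE.coe_re_inner_self_apply (y : X)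
  rw [inner_sub_right, inner_smul_right, ← hEreal, Complex.sub_re, Complex.re_mul_ofReal]
  linarith [mul_nonneg hlam (hEnn y), hA y]

theorem stmt_2_general {X : Type*} [NormedAddCommGroup X] [InnerProductSpace ℂ X] [CompleteSpace X]
    (E : X →L[ℂ] X) (hEsa : IsSelfAdjoint E)
    (hEnn : ∀ x : X, 0 ≤ (⟪x, E x⟫_ℂ).re)
    (A : X →ₗ.[ℂ] X)
    (hAdis : ∀ x : A.domain, (⟪(x : X), A x⟫_ℂ).re ≤ 0)
    (lam : ℂ) (hlam : 0 < lam.re)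
    (R : X →L[ℂ] X) (hR : IsDAEResolvent E A lam R) :
    ∀ x : X, 0 ≤ (⟪x, R x⟫_ℂ).re := by
  intro x
  obtain ⟨hRx, hsolve⟩ := hR.1 x
  have hnonneg := LinearPMap.re_inner_smul_sub_nonneg hEsa.isSymmetric hEnn hAdis hlam.le ⟨R x, hRx⟩
  rwa [hsolve, ← inner_conj_symm, Complex.conj_re] at hnonneg

/-- if `E` is self-adjoint and non-negative and `A` is dissipative, then
for `Re λ > 0` with `λE − A` boundedly invertible, `Re ⟨(λE−A)⁻¹ x, x⟩ ≥ 0` for all `x`. -/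
theorem stmt_2 {X : Type*} [NormedAddCommGroup X] [InnerProductSpace ℂ X] [CompleteSpace X]
    (E : X →L[ℂ] X) (hEsa : IsSelfAdjoint E)
    (hEnn : ∀ x : X, 0 ≤ (⟪x, E x⟫_ℂ).re)
    (A : X →ₗ.[ℂ] X) (hAclosed : A.IsClosed) (hAdense : Dense (A.domain : Set X))
    (hAdis : ∀ x : A.domain, (⟪(x : X), A x⟫_ℂ).re ≤ 0)
    (lam : ℂ) (hlam : 0 < lam.re)
    (R : X →L[ℂ] X) (hR : IsDAEResolvent E A lam R) :
    ∀ x : X, 0 ≤ (⟪x, R x⟫_ℂ).re :=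
  stmt_2_general E hEsa hEnn A hAdis lam hlam R hR
end

section
/- Let X be a Hilbert space, E ∈ L(X) non-negative self-adjoint, A: D(A) ⊆ X → X dissipative, and suppose there exists ω > 0 with (ω,∞) ⊆ ρ(E,A). Then there exist K > 0 and μ > ω such that ‖(λE−A)⁻¹‖ ≤ K λ for all real λ > μ; that is, the resolvent index of (E,A) is at most 2. -/
/-!
For `x = (λE - A)⁻¹ y`, dissipativity of `A` gives `λ ⟪x, E x⟫ ≤ ‖x‖ ‖y‖`, and positivity of `E`
gives `‖E x‖² ≤ ‖E‖ ⟪x, E x⟫`, so `λ ‖E x‖ ≤ √(λ ‖E‖ ‖x‖ ‖y‖)`. Fixing one `λ₀` in the resolvent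
set, `x = (λ₀E - A)⁻¹ (y - (λ - λ₀) E x)` gives `‖x‖ ≤ c (‖y‖ + λ ‖E x‖)` with
`c = ‖(λ₀E - A)⁻¹‖`, and AM-GM absorbs the square root into the left side: `‖x‖ ≤ (2c + c² ‖E‖ λ) ‖y‖`.
-/

open scoped InnerProductSpace

theorem le_mul_of_le_mul_add_of_sq_le_mul {a b c t N : ℝ} (ha : 0 ≤ a) (hb : 0 ≤ b)
    (hN : 0 ≤ N) (hle : a ≤ c * (b + t)) (hsq : t ^ 2 ≤ N * a * b) :
    a ≤ (2 * c + c ^ 2 * N) * b := by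
  -- AM-GM: `2 c t ≤ 2 √(a · c² N b) ≤ a + c² N b`.
  have hct : 2 * (c * t) ≤ a + c ^ 2 * N * b := by
    nlinarith [mul_le_mul_of_nonneg_left hsq (sq_nonneg c), sq_nonneg (a - c ^ 2 * N * b),
      sq_nonneg (c * t), mul_nonneg (mul_nonneg (sq_nonneg c) hN) hb]
  nlinarith

namespace ContinuousLinearMap

variable {X : Type*} [NormedAddCommGroup X] [InnerProductSpace ℂ X] [CompleteSpace X]

theorem nonneg_of_isSelfAdjoint_of_re_inner_nonneg {T : X →L[ℂ] X} (hT : IsSelfAdjoint T)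
    (hnn : ∀ x : X, 0 ≤ (⟪x, T x⟫_ℂ).re) : 0 ≤ T := by
  rw [nonneg_iff_isPositive, isPositive_def']
  refine ⟨hT, fun x => ?_⟩
  rw [reApplyInnerSelf, ← inner_conj_symm, RCLike.conj_re]
  exact hnn x

/-- Cauchy–Schwarz for the form `⟪·, T ·⟫`, proved by factoring `T = √T √T`. -/
theorem sq_norm_apply_le_of_nonneg {T : X →L[ℂ] X} (hT : 0 ≤ T) (x : X) :
    ‖T x‖ ^ 2 ≤ ‖T‖ * (⟪x, T x⟫_ℂ).re := by
  set S := CFC.sqrt T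
  have hS : IsSelfAdjoint S := (CFC.sqrt_nonneg T).isSelfAdjoint
  have hSS : S (S x) = T x := DFunLike.congr_fun (CFC.sqrt_mul_sqrt_self T) x
  have hnormS : ‖S‖ ^ 2 = ‖T‖ := by
    rw [CFC.norm_sqrt T, Real.sq_sqrt (norm_nonneg T)]
  have hSx : ‖S x‖ ^ 2 = (⟪x, T x⟫_ℂ).re := by
    rw [← hSS, ← adjoint_inner_left, hS.adjoint_eq, norm_sq_eq_re_inner (𝕜 := ℂ)]
    rfl
  calc ‖T x‖ ^ 2 = ‖S (S x)‖ ^ 2 := by rw [hSS]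
    _ ≤ (‖S‖ * ‖S x‖) ^ 2 := by gcongr; exact S.le_opNorm _
    _ = ‖T‖ * (⟪x, T x⟫_ℂ).re := by rw [mul_pow, hnormS, hSx]

end ContinuousLinearMap

theorem mul_re_inner_le_of_dissipative {X : Type*} [NormedAddCommGroup X]
    [InnerProductSpace ℂ X] (E : X →L[ℂ] X) {A : X →ₗ.[ℂ] X}
    (hAdis : ∀ x : A.domain, (⟪(x : X), A x⟫_ℂ).re ≤ 0) (x : A.domain) (lam : ℝ) :
    lam * (⟪(x : X), E x⟫_ℂ).re ≤ (⟪(x : X), (lam : ℂ) • E x - A x⟫_ℂ).re := by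
  rw [inner_sub_right, inner_smul_right, Complex.sub_re, Complex.re_ofReal_mul]
  linarith [hAdis x]

namespace IsDAEResolvent

variable {X : Type*} [NormedAddCommGroup X] [InnerProductSpace ℂ X]
  {E : X →L[ℂ] X} {A : X →ₗ.[ℂ] X}

theorem apply_shift {lam₀ : ℂ} {R₀ : X →L[ℂ] X} (hR₀ : IsDAEResolvent E A lam₀ R₀)
    (x : A.domain) (lam : ℂ) : R₀ ((lam • E x - A x) - (lam - lam₀) • E x) = x := by
  conv_rhs => rw [← hR₀.2 x]
  congr 1
  rw [sub_smul]
  abel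

variable [CompleteSpace X]

theorem norm_apply_le (hE : 0 ≤ E) (hAdis : ∀ x : A.domain, (⟪(x : X), A x⟫_ℂ).re ≤ 0)
    {lam₀ lam : ℝ} (hlam₀ : 0 ≤ lam₀) (hlam : lam₀ ≤ lam) {R₀ R : X →L[ℂ] X}
    (hR₀ : IsDAEResolvent E A lam₀ R₀) (hR : IsDAEResolvent E A lam R) (y : X) :
    ‖R y‖ ≤ (2 * ‖R₀‖ + ‖R₀‖ ^ 2 * (lam * ‖E‖)) * ‖y‖ := by
  obtain ⟨hmem, hy⟩ := hR.1 y
  set x : A.domain := ⟨R y, hmem⟩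
  have hlam0 : 0 ≤ lam := hlam₀.trans hlam
  have henergy : lam * (⟪(x : X), E x⟫_ℂ).re ≤ ‖R y‖ * ‖y‖ := by
    have hdis := mul_re_inner_le_of_dissipative E hAdis x lam
    rw [hy] at hdis
    exact hdis.trans (re_inner_le_norm (𝕜 := ℂ) _ _)
  have hshift : ‖R y‖ ≤ ‖R₀‖ * (‖y‖ + lam * ‖E x‖) := by
    have hx := hR₀.apply_shift x lam
    rw [hy, ← Complex.ofReal_sub] at hx
    calc ‖R y‖ = ‖R₀ (y - ((lam - lam₀ : ℝ) : ℂ) • E x)‖ := by rw [hx]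
      _ ≤ ‖R₀‖ * ‖y - ((lam - lam₀ : ℝ) : ℂ) • E x‖ := R₀.le_opNorm _
      _ ≤ ‖R₀‖ * (‖y‖ + lam * ‖E x‖) := by
        gcongr
        refine (norm_sub_le _ _).trans ?_
        rw [norm_smul, Complex.norm_real, Real.norm_of_nonneg (by linarith)]
        gcongr
        linarith
  refine le_mul_of_le_mul_add_of_sq_le_mul (norm_nonneg _) (norm_nonneg _) (by positivity)
    hshift ?_
  calc (lam * ‖E x‖) ^ 2 = lam ^ 2 * ‖E x‖ ^ 2 := by ring
    _ ≤ lam ^ 2 * (‖E‖ * (⟪(x : X), E x⟫_ℂ).re) := by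
        gcongr; exact ContinuousLinearMap.sq_norm_apply_le_of_nonneg hE x
    _ = lam * ‖E‖ * (lam * (⟪(x : X), E x⟫_ℂ).re) := by ring
    _ ≤ lam * ‖E‖ * (‖R y‖ * ‖y‖) := by gcongr
    _ = lam * ‖E‖ * ‖R y‖ * ‖y‖ := by ring

theorem norm_le (hE : 0 ≤ E) (hAdis : ∀ x : A.domain, (⟪(x : X), A x⟫_ℂ).re ≤ 0)
    {lam₀ lam : ℝ} (hlam₀ : 0 ≤ lam₀) (hlam : lam₀ ≤ lam) {R₀ R : X →L[ℂ] X}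
    (hR₀ : IsDAEResolvent E A lam₀ R₀) (hR : IsDAEResolvent E A lam R) :
    ‖R‖ ≤ 2 * ‖R₀‖ + ‖R₀‖ ^ 2 * (lam * ‖E‖) :=
  R.opNorm_le_bound (by positivity [hlam₀.trans hlam])
    (norm_apply_le hE hAdis hlam₀ hlam hR₀ hR)

end IsDAEResolvent

theorem stmt_3_general {X : Type*} [NormedAddCommGroup X] [InnerProductSpace ℂ X] [CompleteSpace X]
    (E : X →L[ℂ] X) (hEsa : IsSelfAdjoint E)
    (hEnn : ∀ x : X, 0 ≤ (⟪x, E x⟫_ℂ).re)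
    (A : X →ₗ.[ℂ] X)
    (hAdis : ∀ x : A.domain, (⟪(x : X), A x⟫_ℂ).re ≤ 0)
    (ω : ℝ)
    (hres : ∀ lam : ℝ, ω < lam → ∃ R : X →L[ℂ] X, IsDAEResolvent E A (lam : ℂ) R) :
    ∃ K > 0, ∃ μ > ω, ∀ lam : ℝ, μ < lam →
      ∀ R : X →L[ℂ] X, IsDAEResolvent E A (lam : ℂ) R → ‖R‖ ≤ K * lam := by
  have hE : 0 ≤ E := ContinuousLinearMap.nonneg_of_isSelfAdjoint_of_re_inner_nonneg hEsa hEnn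
  set μ := max ω 0 + 1
  obtain ⟨R₀, hR₀⟩ := hres μ (by linarith [le_max_left ω 0])
  refine ⟨2 * ‖R₀‖ + ‖R₀‖ ^ 2 * ‖E‖ + 1, by positivity, μ, by linarith [le_max_left ω 0], ?_⟩
  intro lam hlam R hR
  have hμ : 1 ≤ μ := by linarith [le_max_right ω 0]
  calc ‖R‖ ≤ 2 * ‖R₀‖ + ‖R₀‖ ^ 2 * (lam * ‖E‖) :=
        IsDAEResolvent.norm_le hE hAdis (by linarith) hlam.le hR₀ hR
    _ ≤ (2 * ‖R₀‖ + ‖R₀‖ ^ 2 * ‖E‖ + 1) * lam := by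
        nlinarith [norm_nonneg R₀, norm_nonneg E, mul_nonneg (sq_nonneg ‖R₀‖) (norm_nonneg E)]

/-- for `E` non-negative self-adjoint and `A` dissipative with `(ω,∞) ⊆ ρ(E,A)`,
there are `K > 0` and `μ > ω` with `‖(λE−A)⁻¹‖ ≤ K λ` for real `λ > μ`:
the resolvent index is at most `2`. -/
theorem stmt_3 {X : Type*} [NormedAddCommGroup X] [InnerProductSpace ℂ X] [CompleteSpace X]
    (E : X →L[ℂ] X) (hEsa : IsSelfAdjoint E)
    (hEnn : ∀ x : X, 0 ≤ (⟪x, E x⟫_ℂ).re)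
    (A : X →ₗ.[ℂ] X) (hAclosed : A.IsClosed) (hAdense : Dense (A.domain : Set X))
    (hAdis : ∀ x : A.domain, (⟪(x : X), A x⟫_ℂ).re ≤ 0)
    (ω : ℝ) (hω : 0 < ω)
    (hres : ∀ lam : ℝ, ω < lam → ∃ R : X →L[ℂ] X, IsDAEResolvent E A (lam : ℂ) R) :
    ∃ K > 0, ∃ μ > ω, ∀ lam : ℝ, μ < lam →
      ∀ R : X →L[ℂ] X, IsDAEResolvent E A (lam : ℂ) R → ‖R‖ ≤ K * lam :=
  stmt_3_general E hEsa hEnn A hAdis ω hres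
end

section
/- Let X be a Hilbert space, E ∈ L(X) non-negative self-adjoint, A dissipative, and suppose the open right half-plane {Re λ > ω} is contained in ρ(E,A) for some ω > 0. Then there exists K > 0 such that ‖(λE−A)⁻¹‖ ≤ K |λ|²/Re λ for all λ with Re λ > ω; in particular the complex resolvent index of (E,A) is at most 3. -/
/-!
Fix `μ = ω + 1` and its resolvent `S`. For `x ∈ dom A` and `z = (λE - A)x`, dissipativity gives
the energy estimate `Re λ · ⟪x, Ex⟫ ≤ ‖x‖‖z‖`, and since `E ≥ 0`, Cauchy–Schwarz for the
semi-inner product `⟪u, Ev⟫` gives `‖Ex‖² ≤ ‖E‖ ⟪x, Ex⟫`; hence `‖Ex‖² ≤ ‖E‖‖z‖‖x‖ / Re λ`.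
The resolvent identity `x = S z - (λ - μ) S E x` then yields
`‖x‖ ≤ ‖S‖‖z‖ + |λ - μ| ‖S‖ ‖Ex‖`, a quadratic inequality in `√‖x‖` whose solution is
`‖x‖ ≤ (2‖S‖ + |λ - μ|² ‖S‖² ‖E‖ / Re λ) ‖z‖`. Finally `|λ - μ| ≲ |λ|` and `1 ≲ |λ|² / Re λ`
on `Re λ > ω`.
-/

open scoped InnerProductSpace

namespace ContinuousLinearMap

open RCLike

variable {𝕜 H : Type*} [RCLike 𝕜] [NormedAddCommGroup H] [InnerProductSpace 𝕜 H] {T : H →L[𝕜] H}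

theorem IsPositive.norm_inner_mul_norm_inner_le (hT : T.IsPositive) (x y : H) :
    ‖⟪x, T y⟫_𝕜‖ * ‖⟪y, T x⟫_𝕜‖ ≤ re ⟪x, T x⟫_𝕜 * re ⟪y, T y⟫_𝕜 :=
  let core : PreInnerProductSpace.Core 𝕜 H :=
    { inner := fun u v => ⟪u, T v⟫_𝕜
      conj_inner_symm := fun u v => (inner_conj_symm (T u) v).trans (hT.isSymmetric u v)
      re_inner_nonneg := hT.re_inner_nonneg_right
      add_left := fun u v w => inner_add_left u v (T w)
      smul_left := fun u v r => inner_smul_left u (T v) r }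
  InnerProductSpace.Core.inner_mul_inner_self_le (c := core) x y

theorem IsPositive.norm_apply_sq_le (hT : T.IsPositive) (x : H) :
    ‖T x‖ ^ 2 ≤ ‖T‖ * re ⟪x, T x⟫_𝕜 := by
  have h_TTx : re ⟪T x, T (T x)⟫_𝕜 ≤ ‖T‖ * ‖T x‖ ^ 2 :=
    calc re ⟪T x, T (T x)⟫_𝕜 ≤ ‖T x‖ * ‖T (T x)‖ := (re_le_norm _).trans (norm_inner_le_norm _ _)
      _ ≤ ‖T x‖ * (‖T‖ * ‖T x‖) := by gcongr; exact T.le_opNorm _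
      _ = ‖T‖ * ‖T x‖ ^ 2 := by ring
  have h_cs := hT.norm_inner_mul_norm_inner_le x (T x)
  rw [← hT.inner_left_eq_inner_right x (T x)] at h_cs
  simp only [inner_self_eq_norm_sq_to_K, norm_pow, norm_algebraMap', norm_norm] at h_cs
  rcases (norm_nonneg (T x)).eq_or_lt with h0 | hpos
  · rw [← h0]; simpa using mul_nonneg (norm_nonneg T) (hT.re_inner_nonneg_right x)
  · refine le_of_mul_le_mul_left ?_ (pow_pos hpos 2)
    calc ‖T x‖ ^ 2 * ‖T x‖ ^ 2 ≤ re ⟪x, T x⟫_𝕜 * (‖T‖ * ‖T x‖ ^ 2) :=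
          h_cs.trans (mul_le_mul_of_nonneg_left h_TTx (hT.re_inner_nonneg_right x))
      _ = ‖T x‖ ^ 2 * (‖T‖ * re ⟪x, T x⟫_𝕜) := by ring

end ContinuousLinearMap

theorem le_two_mul_add_sq_mul_of_le_add_mul {N a c y d : ℝ} (ha : 0 ≤ a) (hd : 0 ≤ d)
    (hN : N ≤ a + c * y) (hy : y ^ 2 ≤ d * N) : N ≤ 2 * a + c ^ 2 * d := by
  rcases le_or_gt N (2 * a) with hle | hlt
  · nlinarith [mul_nonneg (sq_nonneg c) hd]
  · have hsq : (N - a) ^ 2 ≤ c ^ 2 * (d * N) := by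
      nlinarith [pow_le_pow_left₀ (by linarith : 0 ≤ N - a) (by linarith : N - a ≤ c * y) 2,
        mul_le_mul_of_nonneg_left hy (sq_nonneg c)]
    nlinarith

theorem two_mul_add_norm_sub_sq_mul_div_re_le {ω : ℝ} (hω : 0 < ω) {lam : ℂ} (hlam : ω < lam.re)
    (mu : ℂ) {s t : ℝ} (hs : 0 ≤ s) (ht : 0 ≤ t) :
    2 * s + ‖lam - mu‖ ^ 2 * t / lam.re ≤
      (2 * s / ω + (1 + ‖mu‖ / ω) ^ 2 * t) * ‖lam‖ ^ 2 / lam.re := by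
  have hre : 0 < lam.re := hω.trans hlam
  have hω_le : ω ≤ ‖lam‖ := hlam.le.trans (Complex.re_le_norm lam)
  have h_one : ω * lam.re ≤ ‖lam‖ ^ 2 := by
    nlinarith [Complex.re_le_norm lam]
  have h_sub : ‖lam - mu‖ ≤ (1 + ‖mu‖ / ω) * ‖lam‖ :=
    calc ‖lam - mu‖ ≤ ‖lam‖ + ‖mu‖ := norm_sub_le _ _
      _ ≤ ‖lam‖ + ‖mu‖ / ω * ‖lam‖ := by
          gcongr; rw [div_mul_eq_mul_div, le_div_iff₀ hω]; gcongr
      _ = (1 + ‖mu‖ / ω) * ‖lam‖ := by ring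
  rw [add_mul, add_div]
  gcongr ?_ + ?_
  · rw [div_mul_eq_mul_div, div_div, le_div_iff₀ (by positivity)]
    nlinarith
  · calc ‖lam - mu‖ ^ 2 * t / lam.re ≤ ((1 + ‖mu‖ / ω) * ‖lam‖) ^ 2 * t / lam.re := by gcongr
      _ = _ := by ring

section Pencil

variable {X : Type*} [NormedAddCommGroup X] [InnerProductSpace ℂ X] {E : X →L[ℂ] X}
  {A : X →ₗ.[ℂ] X}

theorem re_mul_re_inner_le_norm_mul_norm_of_dissipative (hE : (E : X →ₗ[ℂ] X).IsSymmetric)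
    (hA : ∀ x : A.domain, (⟪(x : X), A x⟫_ℂ).re ≤ 0) (lam : ℂ) (x : A.domain) :
    lam.re * (⟪(x : X), E x⟫_ℂ).re ≤ ‖(x : X)‖ * ‖lam • E x - A x‖ := by
  have h_re : (⟪(x : X), lam • E x - A x⟫_ℂ).re
      = lam.re * (⟪(x : X), E x⟫_ℂ).re - (⟪(x : X), A x⟫_ℂ).re := by
    have h_im : (⟪(x : X), E x⟫_ℂ).im = 0 := hE.im_inner_self_apply (x : X)
    rw [inner_sub_right, inner_smul_right, Complex.sub_re, Complex.mul_re, h_im, mul_zero,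
      sub_zero]
  have h_cs := (Complex.re_le_norm _).trans (norm_inner_le_norm (x : X) (lam • E x - A x))
  linarith [hA x]

theorem IsDAEResolvent.apply_sub_smul_apply {mu : ℂ} {S : X →L[ℂ] X}
    (hS : IsDAEResolvent E A mu S) (lam : ℂ) (x : A.domain) :
    S (lam • E x - A x) - (lam - mu) • S (E x) = x := by
  rw [← S.map_smul, ← S.map_sub, sub_smul, sub_sub_sub_cancel_left]
  exact hS.2 x

theorem IsDAEResolvent.opNorm_le {lam : ℂ} {R : X →L[ℂ] X} (hR : IsDAEResolvent E A lam R)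
    {C : ℝ} (hC : 0 ≤ C) (h : ∀ x : A.domain, ‖(x : X)‖ ≤ C * ‖lam • E x - A x‖) : ‖R‖ ≤ C := by
  refine R.opNorm_le_bound hC fun z => ?_
  obtain ⟨hz, hRz⟩ := hR.1 z
  simpa [hRz] using h ⟨R z, hz⟩

theorem IsDAEResolvent.norm_le_of_isPositive_of_dissipative {mu : ℂ} {S : X →L[ℂ] X}
    (hS : IsDAEResolvent E A mu S) (hE : E.IsPositive)
    (hA : ∀ x : A.domain, (⟪(x : X), A x⟫_ℂ).re ≤ 0) {lam : ℂ} (hlam : 0 < lam.re)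
    (x : A.domain) :
    ‖(x : X)‖ ≤ (2 * ‖S‖ + ‖lam - mu‖ ^ 2 * (‖S‖ ^ 2 * ‖E‖) / lam.re) * ‖lam • E x - A x‖ := by
  set z := lam • E x - A x
  have h_energy := re_mul_re_inner_le_norm_mul_norm_of_dissipative hE.isSymmetric hA lam x
  have h_Ex : ‖E x‖ ^ 2 ≤ ‖E‖ * ‖z‖ / lam.re * ‖(x : X)‖ := by
    rw [div_mul_eq_mul_div, le_div_iff₀ hlam]
    calc ‖E x‖ ^ 2 * lam.re ≤ ‖E‖ * (⟪(x : X), E x⟫_ℂ).re * lam.re := by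
          gcongr; exact hE.norm_apply_sq_le x
      _ = ‖E‖ * (lam.re * (⟪(x : X), E x⟫_ℂ).re) := by ring
      _ ≤ ‖E‖ * (‖(x : X)‖ * ‖z‖) := by gcongr
      _ = ‖E‖ * ‖z‖ * ‖(x : X)‖ := by ring
  have h_x : ‖(x : X)‖ ≤ ‖S‖ * ‖z‖ + ‖lam - mu‖ * ‖S‖ * ‖E x‖ :=
    calc ‖(x : X)‖ = ‖S z - (lam - mu) • S (E x)‖ := by rw [hS.apply_sub_smul_apply]
      _ ≤ ‖S z‖ + ‖lam - mu‖ * ‖S (E x)‖ := (norm_sub_le _ _).trans_eq (by rw [norm_smul])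
      _ ≤ ‖S‖ * ‖z‖ + ‖lam - mu‖ * (‖S‖ * ‖E x‖) := by
          gcongr <;> exact S.le_opNorm _
      _ = _ := by ring
  calc ‖(x : X)‖ ≤ 2 * (‖S‖ * ‖z‖) + (‖lam - mu‖ * ‖S‖) ^ 2 * (‖E‖ * ‖z‖ / lam.re) :=
        le_two_mul_add_sq_mul_of_le_add_mul (by positivity) (by positivity) h_x h_Ex
    _ = _ := by ring

end Pencil

theorem stmt_4_general {X : Type*} [NormedAddCommGroup X] [InnerProductSpace ℂ X] [CompleteSpace X]
    (E : X →L[ℂ] X) (hEsa : IsSelfAdjoint E)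
    (hEnn : ∀ x : X, 0 ≤ (⟪x, E x⟫_ℂ).re)
    (A : X →ₗ.[ℂ] X)
    (hAdis : ∀ x : A.domain, (⟪(x : X), A x⟫_ℂ).re ≤ 0)
    (ω : ℝ) (hω : 0 < ω)
    (hres : ∀ lam : ℂ, ω < lam.re → ∃ R : X →L[ℂ] X, IsDAEResolvent E A lam R) :
    ∃ K > 0, ∀ lam : ℂ, ω < lam.re →
      ∀ R : X →L[ℂ] X, IsDAEResolvent E A lam R → ‖R‖ ≤ K * ‖lam‖ ^ 2 / lam.re := by
  have hE : E.IsPositive := ⟨hEsa.isSymmetric, fun x => by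
    rw [E.reApplyInnerSelf_apply, inner_re_symm]; exact hEnn x⟩
  obtain ⟨S, hS⟩ := hres (ω + 1) (by simp)
  set K := 2 * ‖S‖ / ω + (1 + ‖(ω : ℂ) + 1‖ / ω) ^ 2 * (‖S‖ ^ 2 * ‖E‖)
  refine ⟨K + 1, by positivity, fun lam hlam R hR => ?_⟩
  have hre : 0 < lam.re := hω.trans hlam
  calc ‖R‖ ≤ 2 * ‖S‖ + ‖lam - (ω + 1)‖ ^ 2 * (‖S‖ ^ 2 * ‖E‖) / lam.re :=
        hR.opNorm_le (by positivity) (hS.norm_le_of_isPositive_of_dissipative hE hAdis hre)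
    _ ≤ K * ‖lam‖ ^ 2 / lam.re :=
        two_mul_add_norm_sub_sq_mul_div_re_le hω hlam _ (norm_nonneg S) (by positivity)
    _ ≤ (K + 1) * ‖lam‖ ^ 2 / lam.re := by gcongr; linarith

/-- for `E` non-negative self-adjoint and `A` dissipative with
`{Re λ > ω} ⊆ ρ(E,A)`, there is `K > 0` with `‖(λE−A)⁻¹‖ ≤ K |λ|² / Re λ` on that half-plane:
the complex resolvent index is at most `3`. -/
theorem stmt_4 {X : Type*} [NormedAddCommGroup X] [InnerProductSpace ℂ X] [CompleteSpace X]
    (E : X →L[ℂ] X) (hEsa : IsSelfAdjoint E)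
    (hEnn : ∀ x : X, 0 ≤ (⟪x, E x⟫_ℂ).re)
    (A : X →ₗ.[ℂ] X) (hAclosed : A.IsClosed) (hAdense : Dense (A.domain : Set X))
    (hAdis : ∀ x : A.domain, (⟪(x : X), A x⟫_ℂ).re ≤ 0)
    (ω : ℝ) (hω : 0 < ω)
    (hres : ∀ lam : ℂ, ω < lam.re → ∃ R : X →L[ℂ] X, IsDAEResolvent E A lam R) :
    ∃ K > 0, ∀ lam : ℂ, ω < lam.re →
      ∀ R : X →L[ℂ] X, IsDAEResolvent E A lam R → ‖R‖ ≤ K * ‖lam‖ ^ 2 / lam.re :=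
  stmt_4_general E hEsa hEnn A hAdis ω hω hres
end

section
/- Let (E,A) have Weierstraß form (diag(I_{Y¹}, N), diag(A₁, I_{Y²})) with N nilpotent of degree p ≥ 1. Then the chain index of (E,A) exists and equals p. In particular: (i) every chain of (E,A) has length at most p, and (ii) choosing z ∈ Y² with N^{p}z = 0 and N^{p−1}z ≠ 0, the tuple x_k := (0, N^{p−k}z), k = 1,…,p, is a chain of length p. -/
/-- A chain of length `p` for the Weierstraß-form system
`E = diag(I, N)`, `A = diag(A₁, I)` on `Y1 × Y2`. -/
def IsChainW {Y1 Y2 : Type*} [NormedAddCommGroup Y1] [NormedSpace ℂ Y1]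
    [NormedAddCommGroup Y2] [NormedSpace ℂ Y2]
    (A₁ : Y1 →ₗ.[ℂ] Y1) (N : Y2 →L[ℂ] Y2) (p : ℕ) (x : ℕ → Y1 × Y2) : Prop :=
  1 ≤ p ∧ (x 1).1 = 0 ∧ N ((x 1).2) = 0 ∧ x 1 ≠ 0 ∧
  ∀ k, 1 ≤ k → k + 1 ≤ p → ∃ hk : (x k).1 ∈ A₁.domain,
    ((A₁ ⟨(x k).1, hk⟩, (x k).2) : Y1 × Y2) ≠ 0 ∧
    (x (k + 1)).1 = A₁ ⟨(x k).1, hk⟩ ∧ N ((x (k + 1)).2) = (x k).2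

/-- for a system in Weierstraß form with `N` nilpotent of degree `p ≥ 1`, the chain
index exists and equals `p`: every chain has length at most `p` (so `p` is the greatest chain
length), and for `z` with `N^p z = 0`, `N^(p−1) z ≠ 0` the tuple `x k = (0, N^(p−k) z)` is a chain
of length `p`. -/
theorem stmt_7 {Y1 Y2 : Type*} [NormedAddCommGroup Y1] [NormedSpace ℂ Y1]
    [NormedAddCommGroup Y2] [NormedSpace ℂ Y2]
    (A₁ : Y1 →ₗ.[ℂ] Y1) (N : Y2 →L[ℂ] Y2) (p : ℕ) (hp : 1 ≤ p)
    (hN : N ^ p = 0) (hN' : N ^ (p - 1) ≠ 0) :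
    IsGreatest {q : ℕ | ∃ x : ℕ → Y1 × Y2, IsChainW A₁ N q x} p ∧
    (∀ z : Y2, (N ^ p) z = 0 → (N ^ (p - 1)) z ≠ 0 →
      IsChainW A₁ N p (fun k => ((0 : Y1), (N ^ (p - k)) z))) := by
  have hA0 : A₁ ⟨(0 : Y1), A₁.domain.zero_mem⟩ = 0 := A₁.map_zero
  have hchain : ∀ z : Y2, (N ^ p) z = 0 → (N ^ (p - 1)) z ≠ 0 →
      IsChainW A₁ N p (fun k => ((0 : Y1), (N ^ (p - k)) z)) := by
    intro z hz hz'
    refine ⟨hp, rfl, ?_, ?_, ?_⟩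
    · show N ((N ^ (p - 1)) z) = 0
      have hmul : N * N ^ (p - 1) = N ^ p := by
        rw [← pow_succ']
        congr 1
        omega
      calc N ((N ^ (p - 1)) z) = (N * N ^ (p - 1)) z := rfl
        _ = (N ^ p) z := by rw [hmul]
        _ = 0 := hz
    · simp only [ne_eq, Prod.mk_eq_zero, not_and]
      intro _
      exact hz'
    · intro k hk hk1
      refine ⟨A₁.domain.zero_mem, ?_, ?_, ?_⟩
      · simp only [ne_eq, Prod.mk_eq_zero, not_and]
        intro _ h2
        apply hz'
        have hmul : N ^ (k - 1) * N ^ (p - k) = N ^ (p - 1) := by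
          rw [← pow_add]
          congr 1
          omega
        calc (N ^ (p - 1)) z = (N ^ (k - 1) * N ^ (p - k)) z := by rw [hmul]
          _ = (N ^ (k - 1)) ((N ^ (p - k)) z) := rfl
          _ = 0 := by rw [h2]; simp
      · exact hA0.symm
      · show N ((N ^ (p - (k + 1))) z) = (N ^ (p - k)) z
        have hmul : N * N ^ (p - (k + 1)) = N ^ (p - k) := by
          rw [← pow_succ']
          congr 1
          omega
        calc N ((N ^ (p - (k + 1))) z) = (N * N ^ (p - (k + 1))) z := rfl
          _ = (N ^ (p - k)) z := by rw [hmul]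
  refine ⟨⟨?_, ?_⟩, hchain⟩
  · obtain ⟨z, hz⟩ : ∃ z, (N ^ (p - 1)) z ≠ 0 := by
      by_contra h
      push_neg at h
      exact hN' (ContinuousLinearMap.ext h)
    exact ⟨fun k => ((0 : Y1), (N ^ (p - k)) z), hchain z (by rw [hN]; rfl) hz⟩
  · rintro q ⟨x, hq1, h2, h3, h4, h5⟩
    by_contra hq
    push_neg at hq
    have key : ∀ m, m + 1 ≤ q → (x 1).2 = (N ^ m) ((x (1 + m)).2) := by
      intro m
      induction m with
      | zero => intro _; simp
      | succ n ih =>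
        intro h
        obtain ⟨_, _, _, hN2⟩ := h5 (1 + n) (by omega) (by omega)
        rw [ih (by omega)]
        have h1n : 1 + n + 1 = 1 + (n + 1) := by omega
        calc (N ^ n) ((x (1 + n)).2) = (N ^ n) (N ((x (1 + n + 1)).2)) := by rw [hN2]
          _ = (N ^ (n + 1)) ((x (1 + (n + 1))).2) := by rw [h1n, pow_succ]; rfl
    have hx2 : (x 1).2 = 0 := by
      rw [key p (by omega), hN]
      rfl
    exact h4 (Prod.ext h2 hx2)
end

section
/- Let N be a bounded nilpotent operator of degree p on a Banach space, and suppose there exist C > 0, ω > 0 and an integer q ∈ ℕ₀ such that ‖(λN−I)⁻¹‖ ≤ C λ^{q−1} for all λ > ω. Then q ≥ p. (This expresses that the resolvent index dominates the nilpotency index for the nilpotent part of a Weierstraß form.) -/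
/-!
Divided by `λ ^ (p - 1)`, the operator polynomial `∑_{i < p} (λN)ⁱ` tends to its leading
coefficient `N ^ (p - 1) ≠ 0` as `λ → ∞`. The resolvent bound makes the same quotient
`O(λ ^ (q - p))`, which tends to `0` when `q < p`.
-/

open Filter Topology Finset

theorem tendsto_inv_pow_smul_sum_pow_smul {E : Type*} [NormedAddCommGroup E] [NormedSpace ℝ E]
    (a : ℕ → E) (n : ℕ) :
    Tendsto (fun t : ℝ => (t ^ n)⁻¹ • ∑ i ∈ range (n + 1), t ^ i • a i) atTop (𝓝 (a n)) := by
  have hreverse : ∀ᶠ t : ℝ in atTop,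
      ∑ i ∈ range (n + 1), t⁻¹ ^ (n - i) • a i = (t ^ n)⁻¹ • ∑ i ∈ range (n + 1), t ^ i • a i := by
    filter_upwards [eventually_ne_atTop 0] with t ht
    rw [smul_sum]
    refine sum_congr rfl fun i hi => ?_
    have hin : i ≤ n := Nat.lt_succ_iff.mp (mem_range.mp hi)
    rw [smul_smul, inv_pow, pow_sub₀ t ht hin, mul_inv, inv_inv]
  have hlim : ∑ i ∈ range (n + 1), (0 : ℝ) ^ (n - i) • a i = a n := by
    rw [sum_range_succ, Nat.sub_self, pow_zero, one_smul, add_eq_right]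
    exact sum_eq_zero fun i hi => by
      rw [zero_pow (Nat.sub_ne_zero_of_lt (mem_range.mp hi)), zero_smul]
  refine Tendsto.congr' hreverse (hlim ▸ tendsto_finsetSum _ fun i _ => ?_)
  exact (tendsto_inv_atTop_zero.pow _).smul_const _

theorem stmt_9_general {Y : Type*} [NormedAddCommGroup Y] [NormedSpace ℂ Y]
    (N : Y →L[ℂ] Y) (p : ℕ) (hN' : N ^ (p - 1) ≠ 0)
    (C ω : ℝ) (q : ℕ)
    (hbound : ∀ lam : ℝ, ω < lam →
      ‖-(∑ i ∈ Finset.range p, ((lam : ℂ) • N) ^ i)‖ ≤ C * lam ^ ((q : ℝ) - 1)) :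
    p ≤ q := by
  obtain _ | n := p
  · exact Nat.zero_le q
  by_contra! hqn
  have hexp : 0 < (n : ℝ) + 1 - q := by
    have : (q : ℝ) < n + 1 := by exact_mod_cast hqn
    linarith
  have hdecay : Tendsto (fun t : ℝ => C * t ^ (-((n : ℝ) + 1 - q))) atTop (𝓝 0) := by
    simpa using (tendsto_rpow_neg_atTop hexp).const_mul C
  have hscaled : Tendsto (fun t : ℝ => (t ^ n)⁻¹ • ∑ i ∈ range (n + 1), t ^ i • N ^ i)
      atTop (𝓝 0) := by
    refine squeeze_zero_norm' ?_ hdecay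
    filter_upwards [eventually_gt_atTop (max ω 0)] with t ht
    have ht0 : 0 < t := (le_max_right ω 0).trans_lt ht
    have hsum := hbound t ((le_max_left ω 0).trans_lt ht)
    simp only [norm_neg, Complex.coe_smul, smul_pow] at hsum
    rw [norm_smul, norm_inv, norm_pow, Real.norm_of_nonneg ht0.le,
      show -((n : ℝ) + 1 - q) = ((q : ℝ) - 1) - n by ring, Real.rpow_sub ht0,
      Real.rpow_natCast, mul_div_assoc', inv_mul_le_iff₀ (pow_pos ht0 n),
      mul_div_cancel₀ _ (pow_pos ht0 n).ne']
    exact hsum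
  exact hN' (tendsto_nhds_unique (tendsto_inv_pow_smul_sum_pow_smul (N ^ ·) n) hscaled)

/-- if `N` is nilpotent of degree `p` and
`‖(λN−I)⁻¹‖ = ‖∑_{i<p} (λN)^i‖ ≤ C λ^(q−1)` for all `λ > ω`, then `q ≥ p`:
the resolvent index dominates the nilpotency index. -/
theorem stmt_9 {Y : Type*} [NormedAddCommGroup Y] [NormedSpace ℂ Y]
    (N : Y →L[ℂ] Y) (p : ℕ) (hN : N ^ p = 0) (hN' : N ^ (p - 1) ≠ 0)
    (C ω : ℝ) (hC : 0 < C) (hω : 0 < ω) (q : ℕ)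
    (hbound : ∀ lam : ℝ, ω < lam →
      ‖-(∑ i ∈ Finset.range p, ((lam : ℂ) • N) ^ i)‖ ≤ C * lam ^ ((q : ℝ) - 1)) :
    p ≤ q :=
  stmt_9_general N p hN' C ω q hbound
end

section
/- Let N be a bounded nilpotent operator of degree p on a Banach space, and suppose there exist C > 0, ω > 0 and r ∈ ℕ₀ such that ‖((λN − I)⁻¹ N)^{r+1}‖ ≤ C/(λ−ω)^{r+1} for all λ > ω. Then p ≤ r + 1. (The radiality index plus one dominates the nilpotency index.) -/
/-- if `N` is nilpotent of degree `p` and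
`‖((λN−I)⁻¹ N)^(r+1)‖ ≤ C/(λ−ω)^(r+1)` for all `λ > ω`, then `p ≤ r + 1`:
the radiality index plus one dominates the nilpotency index. -/
theorem stmt_10 {Y : Type*} [NormedAddCommGroup Y] [NormedSpace ℂ Y]
    (N : Y →L[ℂ] Y) (p : ℕ) (hN : N ^ p = 0) (hN' : N ^ (p - 1) ≠ 0)
    (C ω : ℝ) (hC : 0 < C) (hω : 0 < ω) (r : ℕ)
    (hbound : ∀ lam : ℝ, ω < lam →
      ‖((-(∑ i ∈ Finset.range p, ((lam : ℂ) • N) ^ i)) * N) ^ (r + 1)‖ ≤ C / (lam - ω) ^ (r + 1)) :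
    p ≤ r + 1 := by
  by_contra h
  push_neg at h
  have hp2 : r + 2 ≤ p := h
  set m : ℕ := p - 1 - (r + 1) with hm
  -- key algebraic identity
  have key : ∀ lam : ℝ,
      N ^ m * ((-(∑ i ∈ Finset.range p, ((lam : ℂ) • N) ^ i)) * N) ^ (r + 1)
        = ((-1 : ℂ) ^ (r + 1)) • N ^ (p - 1) := by
    intro lam
    set c : ℂ := (lam : ℂ)
    set S : Y →L[ℂ] Y := ∑ i ∈ Finset.range p, (c • N) ^ i with hS
    have hcomm : Commute S N := by
      apply Commute.sum_left
      intro i _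
      exact (((Commute.refl N).smul_left c).pow_left i)
    -- S * N^(p-1) = N^(p-1)
    have hSN : S * N ^ (p - 1) = N ^ (p - 1) := by
      obtain ⟨q, hq⟩ : ∃ q, p = q + 1 := ⟨p - 1, by omega⟩
      rw [hS, Finset.sum_mul, hq, Finset.sum_range_succ', Nat.add_sub_cancel]
      have hzero : ∀ i ∈ Finset.range q, (c • N) ^ (i + 1) * N ^ q = 0 := by
        intro i _
        rw [smul_pow, smul_mul_assoc, ← pow_add]
        have : N ^ (i + 1 + q) = 0 :=
          pow_eq_zero_of_le (by omega) hN
        rw [this, smul_zero]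
      rw [Finset.sum_congr rfl hzero, Finset.sum_const, smul_zero, zero_add,
        pow_zero, one_mul]
    have hSNpow : ∀ n : ℕ, S ^ n * N ^ (p - 1) = N ^ (p - 1) := by
      intro n
      induction n with
      | zero => simp
      | succ k ih => rw [pow_succ, mul_assoc, hSN, ih]
    have hNmS : (N ^ m) * (S ^ (r + 1)) = (S ^ (r + 1)) * (N ^ m) :=
      (hcomm.symm.pow_pow m (r + 1)).eq
    have hneg : (-(S * N)) ^ (r + 1)
        = ((-1 : ℂ) ^ (r + 1)) • (S * N) ^ (r + 1) := by
      rw [← neg_one_smul ℂ (S * N), smul_pow]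
    calc N ^ m * (-(S * N)) ^ (r + 1)
        = ((-1 : ℂ) ^ (r + 1)) • (N ^ m * (S ^ (r + 1) * N ^ (r + 1))) := by
          rw [hneg, hcomm.mul_pow, mul_smul_comm]
      _ = ((-1 : ℂ) ^ (r + 1)) • (S ^ (r + 1) * N ^ (p - 1)) := by
          rw [← mul_assoc, hNmS, mul_assoc, ← pow_add,
            show m + (r + 1) = p - 1 by omega]
      _ = ((-1 : ℂ) ^ (r + 1)) • N ^ (p - 1) := by rw [hSNpow]
  -- norm consequences
  have hNp : (0 : ℝ) < ‖N ^ (p - 1)‖ := norm_pos_iff.mpr hN'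
  have hbd : ∀ lam : ℝ, ω < lam →
      ‖N ^ (p - 1)‖ ≤ (‖N ^ m‖ + 1) * (C / (lam - ω) ^ (r + 1)) := by
    intro lam hlam
    have h1 : ‖N ^ (p - 1)‖
        = ‖N ^ m * ((-(∑ i ∈ Finset.range p, ((lam : ℂ) • N) ^ i)) * N) ^ (r + 1)‖ := by
      rw [key lam]
      rcases Nat.even_or_odd (r + 1) with he | ho
      · rw [he.neg_one_pow, one_smul]
      · rw [ho.neg_one_pow, neg_one_smul, norm_neg]
    rw [h1]
    calc ‖N ^ m * ((-(∑ i ∈ Finset.range p, ((lam : ℂ) • N) ^ i)) * N) ^ (r + 1)‖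
        ≤ ‖N ^ m‖ * ‖((-(∑ i ∈ Finset.range p, ((lam : ℂ) • N) ^ i)) * N) ^ (r + 1)‖ :=
          norm_mul_le _ _
      _ ≤ (‖N ^ m‖ + 1) * (C / (lam - ω) ^ (r + 1)) := by
          apply mul_le_mul (by linarith [norm_nonneg (N ^ m)]) (hbound lam hlam)
            (norm_nonneg _) (by linarith [norm_nonneg (N ^ m)])
  -- choose lam large enough
  have hX : 0 ≤ (‖N ^ m‖ + 1) * C / ‖N ^ (p - 1)‖ := by positivity
  obtain ⟨t, ht1, htK⟩ : ∃ t : ℝ, 1 ≤ t ∧ (‖N ^ m‖ + 1) * C / ‖N ^ (p - 1)‖ < t :=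
    ⟨(‖N ^ m‖ + 1) * C / ‖N ^ (p - 1)‖ + 1, by linarith, by linarith⟩
  have htpow : t ≤ t ^ (r + 1) := le_self_pow₀ ht1 (by omega)
  have hlam : ω < ω + t := by linarith
  have hb := hbd (ω + t) hlam
  rw [show ω + t - ω = t by ring] at hb
  have hfinal : (‖N ^ m‖ + 1) * (C / t ^ (r + 1)) < ‖N ^ (p - 1)‖ := by
    rw [mul_div_assoc'] at *
    rw [div_lt_iff₀ hNp] at htK
    have htpos : (0 : ℝ) < t ^ (r + 1) := by positivity
    rw [div_lt_iff₀ htpos]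
    calc (‖N ^ m‖ + 1) * C < t * ‖N ^ (p - 1)‖ := htK
      _ ≤ t ^ (r + 1) * ‖N ^ (p - 1)‖ := by nlinarith
      _ = ‖N ^ (p - 1)‖ * t ^ (r + 1) := by ring
  linarith
end

section
/- Let (E,A) = (diag(I_{Y¹}, N), diag(A₁, I_{Y²})) be in Weierstraß form with N nilpotent of degree p, and suppose A₁ generates a C₀-semigroup S on Y¹. Then there exists c > 0 such that every classical solution x = (x₁,x₂) of d/dt Ex(t) = Ax(t) + δ(t) on [0,T], with δ = (δ₁,δ₂) ∈ C^{p−1}([0,T]), satisfies max_{0≤t≤T}‖x(t)‖ ≤ c(‖x(0)‖ + ∑_{i=0}^{p−1} max_{0≤t≤T}‖δ^{(i)}(t)‖). In particular the perturbation index of (E,A) equals p. -/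
open Set Filter Topology

/-!
The two components decouple. For `x₁' = A₁ x₁ + δ₁`, the map `u ↦ S (t - u) (x₁ u)` has right
derivative `S (t - u) (δ₁ u)`, so the mean value inequality gives the variation-of-constants
estimate `‖x₁ t - S t (x₁ 0)‖ ≤ t · sup ‖S‖ · sup ‖δ₁‖`, and `sup_{[0,T]} ‖S‖ < ∞` by uniform
boundedness. For `N x₂' = x₂ + δ₂` with `N ^ p = 0`, one has `x₂ = -∑_{i<p} N ^ i δ₂⁽ⁱ⁾`.
-/

section NormedSpaces

variable {𝕜 E F : Type*} [NontriviallyNormedField 𝕜] [NormedAddCommGroup E] [NormedSpace 𝕜 E]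
  [NormedAddCommGroup F] [NormedSpace 𝕜 F]

theorem Filter.Tendsto.clm_apply_of_norm_le {α : Type*} {l : Filter α} {T : α → E →L[𝕜] F}
    {v : α → E} {v₀ : E} {y : F} {C : ℝ} (hT : ∀ᶠ a in l, ‖T a‖ ≤ C)
    (hT₀ : Tendsto (fun a => T a v₀) l (𝓝 y)) (hv : Tendsto v l (𝓝 v₀)) :
    Tendsto (fun a => T a (v a)) l (𝓝 y) := by
  have hsmall : Tendsto (fun a => T a (v a - v₀)) l (𝓝 0) := by
    refine squeeze_zero_norm' (hT.mono fun a ha => (T a).le_of_opNorm_le ha _) ?_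
    simpa using (tendsto_iff_norm_sub_tendsto_zero.1 hv).const_mul C
  simpa using hT₀.add hsmall

theorem IsCompact.exists_pos_norm_le_of_continuousOn_apply [CompleteSpace E] {X : Type*}
    [TopologicalSpace X] {K : Set X} (hK : IsCompact K) {T : X → E →L[𝕜] F}
    (hT : ∀ v, ContinuousOn (fun x => T x v) K) : ∃ C > 0, ∀ x ∈ K, ‖T x‖ ≤ C := by
  obtain ⟨C, hC⟩ := banach_steinhaus (g := fun x : K => T x) fun v => by
    obtain ⟨C, hC⟩ := hK.exists_bound_of_continuousOn (hT v)
    exact ⟨C, fun x => hC x x.2⟩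
  exact ⟨max C 1, by positivity, fun x hx => (hC ⟨x, hx⟩).trans (le_max_left _ _)⟩

theorem HasDerivAt.fst {f : 𝕜 → E × F} {f' : E × F} {x : 𝕜} (h : HasDerivAt f f' x) :
    HasDerivAt (fun u => (f u).1) f'.1 x := by
  simpa using h.hasFDerivAt.fst.hasDerivAt

theorem HasDerivAt.snd {f : 𝕜 → E × F} {f' : E × F} {x : 𝕜} (h : HasDerivAt f f' x) :
    HasDerivAt (fun u => (f u).2) f'.2 x := by
  simpa using h.hasFDerivAt.snd.hasDerivAt

theorem ContDiff.hasDerivAt_iteratedDeriv {f : 𝕜 → F} {n i : ℕ} (hf : ContDiff 𝕜 n f)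
    (hi : i < n) (x : 𝕜) : HasDerivAt (iteratedDeriv i f) (iteratedDeriv (i + 1) f x) x := by
  rw [iteratedDeriv_succ]
  exact (hf.differentiable_iteratedDeriv i (by exact_mod_cast hi) x).hasDerivAt

end NormedSpaces

theorem ContDiff.norm_iteratedDeriv_le_sum_sSup {F : Type*} [NormedAddCommGroup F]
    [NormedSpace ℝ F] {δ : ℝ → F} {n p i : ℕ} (hδ : ContDiff ℝ n δ) (hp : p ≤ n + 1) (hi : i < p)
    {a b s : ℝ} (hs : s ∈ Icc a b) :
    ‖iteratedDeriv i δ s‖ ≤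
      ∑ j ∈ Finset.range p, sSup ((fun s => ‖iteratedDeriv j δ s‖) '' Icc a b) := by
  have hsSup : ∀ j < p,
      ‖iteratedDeriv j δ s‖ ≤ sSup ((fun s => ‖iteratedDeriv j δ s‖) '' Icc a b) :=
    fun j hj => (hδ.continuous_iteratedDeriv j (by exact_mod_cast (by omega : j ≤ n))).norm
      |>.continuousOn.le_sSup_image_Icc hs
  exact (hsSup i hi).trans <| Finset.single_le_sum
    (fun j hj => (norm_nonneg _).trans (hsSup j (Finset.mem_range.1 hj))) (Finset.mem_range.2 hi)

structure IsC0Semigroup {E : Type*} [NormedAddCommGroup E] [NormedSpace ℝ E]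
    (S : ℝ → E →L[ℝ] E) : Prop where
  map_zero : S 0 = 1
  map_add : ∀ s t, 0 ≤ s → 0 ≤ t → S (s + t) = S s ∘L S t
  continuousOn_apply : ∀ v, ContinuousOn (fun t => S t v) (Ici 0)

namespace IsC0Semigroup

variable {E : Type*} [NormedAddCommGroup E] [NormedSpace ℝ E] {S : ℝ → E →L[ℝ] E}

theorem exists_pos_norm_le [CompleteSpace E] (hS : IsC0Semigroup S) (T : ℝ) :
    ∃ C > 0, ∀ t ∈ Icc 0 T, ‖S t‖ ≤ C :=
  isCompact_Icc.exists_pos_norm_le_of_continuousOn_apply fun v =>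
    (hS.continuousOn_apply v).mono Icc_subset_Ici_self

theorem continuousOn_apply_sub (hS : IsC0Semigroup S) (t : ℝ) (v : E) :
    ContinuousOn (fun u => S (t - u) v) (Iic t) :=
  (hS.continuousOn_apply v).comp (continuousOn_const.sub continuousOn_id) fun _ hu =>
    mem_Ici.2 (sub_nonneg.2 hu)

variable {t C : ℝ} {x : ℝ → E}

theorem continuousOn_apply_sub_apply (hS : IsC0Semigroup S) (hC : ∀ r ∈ Icc 0 t, ‖S r‖ ≤ C)
    (hx : ContinuousOn x (Icc 0 t)) : ContinuousOn (fun u => S (t - u) (x u)) (Icc 0 t) := by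
  intro u hu
  refine ((hS.continuousOn_apply_sub t (x u)).mono Icc_subset_Iic_self u hu).clm_apply_of_norm_le
    (C := C) ?_ (hx u hu)
  filter_upwards [self_mem_nhdsWithin] with r hr
  exact hC _ ⟨sub_nonneg.2 hr.2, by linarith [hr.1]⟩

/-- Writing `S (t - s) = S (t - u) ∘ S (u - s)`, the right difference quotient at `s` is
`S (t - u)` applied to (slope of `x`) minus (generator quotient at `x s`), which tends to `f`. -/
theorem hasDerivWithinAt_apply_sub_apply (hS : IsC0Semigroup S) (hC : ∀ r ∈ Icc 0 t, ‖S r‖ ≤ C)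
    {s : ℝ} (hs : s ∈ Ico 0 t) {a f : E}
    (hgen : Tendsto (fun h : ℝ => h⁻¹ • (S h (x s) - x s)) (𝓝[>] 0) (𝓝 a))
    (hx : HasDerivWithinAt x (a + f) (Ici s) s) :
    HasDerivWithinAt (fun u => S (t - u) (x u)) (S (t - s) f) (Ici s) s := by
  rw [← hasDerivWithinAt_Ioi_iff_Ici, hasDerivWithinAt_iff_tendsto_slope' self_notMem_Ioi,
    ← nhdsWithin_Ioc_eq_nhdsGT hs.2]
  rw [← hasDerivWithinAt_Ioi_iff_Ici, hasDerivWithinAt_iff_tendsto_slope' self_notMem_Ioi] at hx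
  have hsub : Tendsto (fun u => u - s) (𝓝[Ioc s t] s) (𝓝[>] 0) := by
    simpa using ((continuous_sub_right s).continuousWithinAt (s := Ioc s t) (x := s))
      |>.tendsto_nhdsWithin (t := Ioi 0) fun u hu => sub_pos.2 hu.1
  have hquot : Tendsto (fun u => slope x s u - (u - s)⁻¹ • (S (u - s) (x s) - x s))
      (𝓝[Ioc s t] s) (𝓝 f) := by
    simpa using (hx.mono_left (nhdsWithin_mono _ Ioc_subset_Ioi_self)).sub (hgen.comp hsub)
  have hSf : Tendsto (fun u => S (t - u) f) (𝓝[Ioc s t] s) (𝓝 (S (t - s) f)) :=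
    (hS.continuousOn_apply_sub t f s hs.2.le).mono_left (nhdsWithin_mono _ fun u hu => hu.2)
  have hbound : ∀ᶠ u in 𝓝[Ioc s t] s, ‖S (t - u)‖ ≤ C := by
    filter_upwards [self_mem_nhdsWithin] with u hu
    exact hC _ ⟨sub_nonneg.2 hu.2, by linarith [hs.1, hu.1]⟩
  refine (hSf.clm_apply_of_norm_le hbound hquot).congr' ?_
  filter_upwards [self_mem_nhdsWithin] with u hu
  have hsplit : S (t - s) (x s) = S (t - u) (S (u - s) (x s)) := by
    rw [← ContinuousLinearMap.comp_apply, ← hS.map_add _ _ (sub_nonneg.2 hu.2)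
      (sub_nonneg.2 hu.1.le), sub_add_sub_cancel]
  simp only [slope_def_module, hsplit, map_sub, map_smul]
  module

theorem norm_sub_le_of_hasDerivWithinAt (hS : IsC0Semigroup S) (ht : 0 ≤ t)
    (hC : ∀ r ∈ Icc 0 t, ‖S r‖ ≤ C) (hx : ContinuousOn x (Icc 0 t)) {f : ℝ → E} {M : ℝ}
    (hx' : ∀ s ∈ Ico 0 t, ∃ a, Tendsto (fun h : ℝ => h⁻¹ • (S h (x s) - x s)) (𝓝[>] 0) (𝓝 a) ∧
      HasDerivWithinAt x (a + f s) (Ici s) s)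
    (hf : ∀ s ∈ Ico 0 t, ‖f s‖ ≤ M) :
    ‖x t - S t (x 0)‖ ≤ C * M * t := by
  have key := norm_image_sub_le_of_norm_deriv_right_le_segment
    (hS.continuousOn_apply_sub_apply hC hx)
    (fun s hs => by
      obtain ⟨a, hgen, hxs⟩ := hx' s hs
      exact hS.hasDerivWithinAt_apply_sub_apply hC hs hgen hxs)
    (fun s hs => (S (t - s)).le_of_opNorm_le_of_le
      (hC _ ⟨sub_nonneg.2 hs.2.le, by linarith [hs.1]⟩) (hf s hs))
    t (right_mem_Icc.2 ht)
  simpa [hS.map_zero] using key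

theorem norm_le_of_hasDerivAt (hS : IsC0Semigroup S) {T M : ℝ} (hC : ∀ r ∈ Icc 0 T, ‖S r‖ ≤ C)
    {f : ℝ → E} (hx : ∀ s ∈ Icc 0 T, ∃ a, Tendsto (fun h : ℝ => h⁻¹ • (S h (x s) - x s))
      (𝓝[>] 0) (𝓝 a) ∧ HasDerivAt x (a + f s) s)
    (hf : ∀ s ∈ Icc 0 T, ‖f s‖ ≤ M) (ht : t ∈ Icc 0 T) : ‖x t‖ ≤ C * ‖x 0‖ + C * M * T := by
  have hCM : 0 ≤ C * M := mul_nonneg ((norm_nonneg _).trans (hC 0 ⟨le_rfl, ht.1.trans ht.2⟩))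
    ((norm_nonneg _).trans (hf 0 ⟨le_rfl, ht.1.trans ht.2⟩))
  have hsub : ‖x t - S t (x 0)‖ ≤ C * M * t :=
    hS.norm_sub_le_of_hasDerivWithinAt ht.1 (fun r hr => hC r ⟨hr.1, hr.2.trans ht.2⟩)
      (fun s hs => (hx s ⟨hs.1, hs.2.trans ht.2⟩).choose_spec.2.continuousAt.continuousWithinAt)
      (fun s hs => (hx s ⟨hs.1, hs.2.le.trans ht.2⟩).imp fun _ h => ⟨h.1, h.2.hasDerivWithinAt⟩)
      (fun s hs => hf s ⟨hs.1, hs.2.le.trans ht.2⟩)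
  calc ‖x t‖ ≤ ‖x t - S t (x 0)‖ + ‖S t (x 0)‖ := norm_le_norm_sub_add _ _
    _ ≤ C * M * t + C * ‖x 0‖ := add_le_add hsub ((S t).le_of_opNorm_le (hC t ht) _)
    _ ≤ C * ‖x 0‖ + C * M * T := by nlinarith [ht.2]

end IsC0Semigroup

section Nilpotent

variable {F : Type*} [NormedAddCommGroup F] [NormedSpace ℝ F] {N : F →L[ℝ] F} {p : ℕ} {a b : ℝ}
  {y : ℝ → F} {g : ℕ → ℝ → F}

/-- Downward induction on `k`, starting from `N ^ p y = 0`: differentiating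
`N ^ (k + 1) y = -∑ N ^ (k + 1 + i) gᵢ` and using `N y' = y + g₀` gives the identity for `N ^ k y`. -/
theorem eq_neg_sum_pow_apply_of_hasDerivAt (hN : N ^ p = 0) (hab : a < b)
    (hg : ∀ i, i + 1 < p → ∀ s ∈ Icc a b, HasDerivAt (g i) (g (i + 1) s) s)
    (hy : ∀ s ∈ Icc a b, HasDerivAt (fun u => N (y u)) (y s + g 0 s) s) {s : ℝ}
    (hs : s ∈ Icc a b) : y s = -∑ i ∈ Finset.range p, (N ^ i) (g i s) := by
  suffices h : ∀ k ≤ p, ∀ s ∈ Icc a b,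
      (N ^ k) (y s) = -∑ i ∈ Finset.range (p - k), (N ^ (k + i)) (g i s) by
    simpa using h 0 p.zero_le s hs
  intro k hk
  induction hk using Nat.decreasingInduction with
  | self => simp [hN]
  | of_succ k hkp ih =>
    intro s hs
    have hderiv : (N ^ k) (y s + g 0 s)
        = -∑ i ∈ Finset.range (p - (k + 1)), (N ^ (k + 1 + i)) (g (i + 1) s) := by
      refine (uniqueDiffOn_Icc hab s hs).eq_deriv _ ?_
        ((HasDerivAt.fun_sum fun i hi => ?_).neg.hasDerivWithinAt.congr ih (ih s hs))
      · simpa [pow_succ, Function.comp_def] using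
          ((N ^ k).hasFDerivAt.comp_hasDerivAt s (hy s hs)).hasDerivWithinAt
      · exact (N ^ (k + 1 + i)).hasFDerivAt.comp_hasDerivAt s
          (hg i (by simp at hi; omega) s hs)
    rw [map_add, ← eq_sub_iff_add_eq] at hderiv
    rw [hderiv, show p - k = p - (k + 1) + 1 by omega, Finset.sum_range_succ']
    simp only [add_assoc, add_comm 1, add_zero, neg_add, sub_eq_add_neg]

theorem norm_le_of_hasDerivAt_of_pow_eq_zero (hN : N ^ p = 0) (hab : a < b)
    (hg : ∀ i, i + 1 < p → ∀ s ∈ Icc a b, HasDerivAt (g i) (g (i + 1) s) s)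
    (hy : ∀ s ∈ Icc a b, HasDerivAt (fun u => N (y u)) (y s + g 0 s) s) {s M : ℝ}
    (hgM : ∀ i < p, ‖g i s‖ ≤ M) (hs : s ∈ Icc a b) :
    ‖y s‖ ≤ (∑ i ∈ Finset.range p, ‖N ^ i‖) * M := by
  rw [eq_neg_sum_pow_apply_of_hasDerivAt hN hab hg hy hs, norm_neg, Finset.sum_mul]
  exact (norm_sum_le _ _).trans <| Finset.sum_le_sum fun i hi =>
    (N ^ i).le_of_opNorm_le_of_le le_rfl (hgM i (Finset.mem_range.1 hi))

end Nilpotent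

theorem stmt_19_general {Y1 Y2 : Type*}
    [NormedAddCommGroup Y1] [NormedSpace ℂ Y1] [CompleteSpace Y1]
    [NormedAddCommGroup Y2] [NormedSpace ℂ Y2]
    (A₁ : Y1 →ₗ.[ℂ] Y1) (N : Y2 →L[ℂ] Y2) (p : ℕ) (hp : 1 ≤ p)
    (hN : N ^ p = 0)
    -- `A₁` generates the `C₀`-semigroup `S`
    (S : ℝ → Y1 →L[ℂ] Y1) (hS0 : S 0 = 1)
    (hSadd : ∀ s t : ℝ, 0 ≤ s → 0 ≤ t → S (s + t) = (S s).comp (S t))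
    (hScont : ∀ y : Y1, ContinuousOn (fun t => S t y) (Ici 0))
    (hSgen : ∀ y : A₁.domain, Tendsto (fun h : ℝ => h⁻¹ • (S h (y : Y1) - (y : Y1)))
      (nhdsWithin 0 (Ioi 0)) (nhds (A₁ y)))
    (T : ℝ) (hT : 0 < T) :
    ∃ c > 0, ∀ δ : ℝ → Y1 × Y2, ContDiff ℝ (↑(p - 1)) δ →
      ∀ x : ℝ → Y1 × Y2,
        (∀ t ∈ Icc 0 T, ∃ h : (x t).1 ∈ A₁.domain,
          HasDerivAt (fun s => ((x s).1, N ((x s).2)))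
            ((A₁ ⟨(x t).1, h⟩ + (δ t).1, (x t).2 + (δ t).2)) t) →
        ∀ t ∈ Icc 0 T, ‖x t‖ ≤ c * (‖x 0‖ +
          ∑ i ∈ Finset.range p,
            sSup ((fun s => ‖iteratedDeriv i δ s‖) '' Icc 0 T)) := by
  have hS : IsC0Semigroup fun t => (S t).restrictScalars ℝ :=
    ⟨by ext; simp [hS0], fun s t hs ht => by ext; simp [hSadd s t hs ht], hScont⟩
  obtain ⟨C, hC0, hC⟩ := hS.exists_pos_norm_le T
  set N' := N.restrictScalars ℝ
  have hN' : N' ^ p = 0 := by ext v; simpa [N'] using congr($hN v)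
  set K := ∑ i ∈ Finset.range p, ‖N' ^ i‖
  have hK : 0 ≤ K := Finset.sum_nonneg fun i _ => norm_nonneg _
  refine ⟨C * (1 + T) + K, by positivity, fun δ hδ x hx t ht => ?_⟩
  set D := ∑ i ∈ Finset.range p, sSup ((fun s => ‖iteratedDeriv i δ s‖) '' Icc 0 T)
  have hδD : ∀ i < p, ∀ s ∈ Icc 0 T, ‖iteratedDeriv i δ s‖ ≤ D := fun i hi s hs =>
    hδ.norm_iteratedDeriv_le_sum_sSup (by omega) hi hs
  have hD : 0 ≤ D := (norm_nonneg _).trans (hδD 0 hp 0 ⟨le_rfl, hT.le⟩)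
  have hx₁ : ‖(x t).1‖ ≤ C * ‖(x 0).1‖ + C * D * T :=
    hS.norm_le_of_hasDerivAt hC
      (fun s hs => (hx s hs).elim fun h hd => ⟨_, hSgen ⟨_, h⟩, hd.fst⟩)
      (fun s hs => (norm_fst_le _).trans (by simpa using hδD 0 hp s hs)) ht
  have hx₂ : ‖(x t).2‖ ≤ K * D :=
    norm_le_of_hasDerivAt_of_pow_eq_zero hN' hT (g := fun i s => (iteratedDeriv i δ s).2)
      (fun i hi s _ => (hδ.hasDerivAt_iteratedDeriv (by omega) s).snd)
      (fun s hs => by simpa [N'] using (hx s hs).choose_spec.snd)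
      (fun i hi => (norm_snd_le _).trans (hδD i hi t ht)) ht
  refine norm_prod_le_iff.2 ⟨?_, ?_⟩ <;>
    nlinarith [norm_fst_le (x 0), norm_nonneg (x 0), mul_nonneg hC0.le hT.le]

/-- for a Weierstraß form `(diag(I,N), diag(A₁,I))` with `N` nilpotent of degree
`p` and `A₁` generating a `C₀`-semigroup `S`, there is `c > 0` such that every classical solution
of `d/dt Ex = Ax + δ` on `[0,T]` with `δ ∈ C^{p−1}` satisfies
`max_{[0,T]}‖x‖ ≤ c(‖x(0)‖ + ∑_{i<p} max_{[0,T]}‖δ^{(i)}‖)`; the perturbation index equals `p`. -/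
theorem stmt_19 {Y1 Y2 : Type*}
    [NormedAddCommGroup Y1] [NormedSpace ℂ Y1] [CompleteSpace Y1]
    [NormedAddCommGroup Y2] [NormedSpace ℂ Y2]
    (A₁ : Y1 →ₗ.[ℂ] Y1) (N : Y2 →L[ℂ] Y2) (p : ℕ) (hp : 1 ≤ p)
    (hN : N ^ p = 0) (hN' : N ^ (p - 1) ≠ 0)
    -- `A₁` generates the `C₀`-semigroup `S`
    (S : ℝ → Y1 →L[ℂ] Y1) (hS0 : S 0 = 1)
    (hSadd : ∀ s t : ℝ, 0 ≤ s → 0 ≤ t → S (s + t) = (S s).comp (S t))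
    (hScont : ∀ y : Y1, ContinuousOn (fun t => S t y) (Ici 0))
    (hSgen : ∀ y : A₁.domain, Tendsto (fun h : ℝ => h⁻¹ • (S h (y : Y1) - (y : Y1)))
      (nhdsWithin 0 (Ioi 0)) (nhds (A₁ y)))
    (T : ℝ) (hT : 0 < T) :
    ∃ c > 0, ∀ δ : ℝ → Y1 × Y2, ContDiff ℝ (↑(p - 1)) δ →
      ∀ x : ℝ → Y1 × Y2,
        (∀ t ∈ Icc 0 T, ∃ h : (x t).1 ∈ A₁.domain,
          HasDerivAt (fun s => ((x s).1, N ((x s).2)))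
            ((A₁ ⟨(x t).1, h⟩ + (δ t).1, (x t).2 + (δ t).2)) t) →
        ∀ t ∈ Icc 0 T, ‖x t‖ ≤ c * (‖x 0‖ +
          ∑ i ∈ Finset.range p,
            sSup ((fun s => ‖iteratedDeriv i δ s‖) '' Icc 0 T)) :=
  stmt_19_general A₁ N p hp hN S hS0 hSadd hScont hSgen T hT
end
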